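/- Fix s < 0 and x, y ∈ ℝ. For z > 0 define τ₁(z) := (1 + 6s·z⁴)/(3z⁶), τ₂(z) := (1 − 6s·z⁴)/(3z⁶), ξ(z) := (2/27)(3τ₁(z))^{3/2} − (3τ₁(z))^{1/6}·x, and η(z) := (2/27)(3τ₂(z))^{3/2} − (3τ₂(z))^{1/6}·y. Then, as z → 0⁺, (3τ₁(z))^{1/12}·(3τ₂(z))^{1/12}·exp((Φ(x,s;z⁴) − h(x,s;z⁴)) − (Φ(y,−s;z⁴) − h(y,−s;z⁴)))·p^P(τ₂(z) − τ₁(z); ξ(z), η(z)) − p^A(−2s; x, y) = O(z⁸). -/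

import Mathlib

/-!
Put `v = z⁴`. Then `3τ₁ = (1 + 6sv)/z⁶`, `3τ₂ = (1 - 6sv)/z⁶` and `τ₂ - τ₁ = -4s/z²`, so every
power of `z` outside the exponentials cancels, and the left-hand side plus `p^A` equals
`(1 - 36s²v²)^{1/12} e^{E(v)} / √(-8πs)`, where `E(v)` collects the Pearcey phase and the Gaussian
exponent `-(ξ - η)²/(2(τ₂ - τ₁))`. The binomial series of `(1 ± 6sv)^{3/2}` and `(1 ± 6sv)^{1/6}`
give `z⁹(ξ - η) = P(v) + O(v⁵)` for an explicit quartic `P` with `P(0) = 0`. The singular terms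
`-2s/(9v²) + (x - y)/(3v)` of the phase cancel exactly against those of `P(v)²/(8sv⁴)`, so
`E(v)` equals the Airy exponent up to `O(v²) = O(z⁸)`.
-/

open Filter Set Asymptotics

/-- The rational function
`Φ(x,t;u) = −1/(4(3u)³) − t/(3u)² + (x − t²)/(3u) + (4/3)tx + (u/6)t²x`. -/
noncomputable def PhiFun (x t u : ℝ) : ℝ :=
  -1 / (4 * (3 * u) ^ 3) - t / (3 * u) ^ 2 + (x - t ^ 2) / (3 * u)
    + (4 / 3) * t * x + (u / 6) * t ^ 2 * x

/-- `h(x,t;u) = (ux/4)(x + 6t²)`. -/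
noncomputable def hFun (x t u : ℝ) : ℝ := (u * x / 4) * (x + 6 * t ^ 2)

/-- The Pearcey Gaussian transition density `p^P(τ;ξ,η)`. -/
noncomputable def pP (τ ξ η : ℝ) : ℝ :=
  (1 / Real.sqrt (2 * Real.pi * τ)) * Real.exp (-(ξ - η) ^ 2 / (2 * τ))

/-- The Airy Gaussian factor `p^A(t;x,y)`. -/
noncomputable def pA (t x y : ℝ) : ℝ :=
  (1 / Real.sqrt (4 * Real.pi * t)) *
    Real.exp (t ^ 3 / 12 - (x - y) ^ 2 / (4 * t) - t * (x + y) / 2)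

open scoped Topology

theorem one_add_mul_rpow_sub_sum_isBigO (c a : ℝ) (n : ℕ) :
    (fun v : ℝ => (1 + c * v) ^ a - ∑ k ∈ Finset.range n, Ring.choose a k * (c * v) ^ k)
      =O[𝓝 0] (· ^ n) := by
  have h := (Real.one_add_rpow_hasFPowerSeriesAt_zero (a := a)).isBigO_sub_partialSum_pow n
  simp only [zero_add, FormalMultilinearSeries.partialSum, binomialSeries_apply,
    List.ofFn_const, List.prod_replicate, smul_eq_mul, ← norm_pow] at h
  have hc : Tendsto (fun v : ℝ => c * v) (𝓝 0) (𝓝 0) := by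
    simpa using (continuous_const_mul c).tendsto 0
  refine ((isBigO_norm_right.mp h).comp_tendsto hc).trans ?_
  refine ((isBigO_refl (fun v : ℝ => v ^ n) (𝓝 0)).const_mul_left (c ^ n)).congr_left fun v => ?_
  simp [mul_pow]

theorem one_add_mul_rpow_three_halves_sub_isBigO (c : ℝ) :
    (fun v : ℝ => (1 + c * v) ^ ((3 : ℝ) / 2)
        - (1 + 3 / 2 * c * v + 3 / 8 * c ^ 2 * v ^ 2 - 1 / 16 * c ^ 3 * v ^ 3
          + 3 / 128 * c ^ 4 * v ^ 4))
      =O[𝓝 0] (· ^ 5) := by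
  refine (one_add_mul_rpow_sub_sum_isBigO c ((3 : ℝ) / 2) 5).congr_left fun v => ?_
  simp only [Finset.sum_range_succ, Finset.sum_range_zero, Ring.choose_eq_smul,
    descPochhammer_succ_right, descPochhammer_zero, Polynomial.smeval_mul, Polynomial.smeval_sub,
    Polynomial.smeval_X, Polynomial.smeval_natCast, one_mul]
  norm_num [Nat.factorial]
  ring

theorem one_add_mul_rpow_one_sixth_sub_isBigO (c : ℝ) :
    (fun v : ℝ => (1 + c * v) ^ ((1 : ℝ) / 6) - (1 + 1 / 6 * c * v - 5 / 72 * c ^ 2 * v ^ 2))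
      =O[𝓝 0] (· ^ 3) := by
  refine (one_add_mul_rpow_sub_sum_isBigO c ((1 : ℝ) / 6) 3).congr_left fun v => ?_
  simp only [Finset.sum_range_succ, Finset.sum_range_zero, Ring.choose_eq_smul,
    descPochhammer_succ_right, descPochhammer_zero, Polynomial.smeval_mul, Polynomial.smeval_sub,
    Polynomial.smeval_X, Polynomial.smeval_natCast, one_mul]
  norm_num [Nat.factorial]
  ring

/-- With `v = z⁴` one has `ξ(z) - η(z) = rescaledGap s x y v / z⁹`. -/
noncomputable def rescaledGap (s x y v : ℝ) : ℝ :=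
  2 / 27 * ((1 + 6 * s * v) ^ ((3 : ℝ) / 2) - (1 - 6 * s * v) ^ ((3 : ℝ) / 2))
    - v ^ 2 * ((1 + 6 * s * v) ^ ((1 : ℝ) / 6) * x - (1 - 6 * s * v) ^ ((1 : ℝ) / 6) * y)

noncomputable def rescaledGapTaylor (s x y v : ℝ) : ℝ :=
  4 * s / 3 * v - (x - y) * v ^ 2 + (-2 * s ^ 3 - s * (x + y)) * v ^ 3
    + 5 / 2 * s ^ 2 * (x - y) * v ^ 4

theorem rescaledGap_sub_rescaledGapTaylor_isBigO (s x y : ℝ) :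
    (fun v => rescaledGap s x y v - rescaledGapTaylor s x y v) =O[𝓝 0] (· ^ 5) := by
  have hv2 := isBigO_refl (fun v : ℝ => v ^ 2) (𝓝 0)
  have h₁ := (one_add_mul_rpow_three_halves_sub_isBigO (6 * s)).const_mul_left (2 / 27 : ℝ)
  have h₂ := (one_add_mul_rpow_three_halves_sub_isBigO (-(6 * s))).const_mul_left (2 / 27 : ℝ)
  have h₃ := (hv2.mul (one_add_mul_rpow_one_sixth_sub_isBigO (6 * s))).const_mul_left x
  have h₄ := (hv2.mul (one_add_mul_rpow_one_sixth_sub_isBigO (-(6 * s)))).const_mul_left y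
  simp only [neg_mul, ← sub_eq_add_neg, ← pow_add] at h₂ h₃ h₄
  refine (((h₁.sub h₂).sub h₃).add h₄).congr_left fun v => ?_
  simp only [rescaledGap, rescaledGapTaylor]
  ring

theorem rescaledGapTaylor_isBigO (s x y : ℝ) :
    (fun v => rescaledGapTaylor s x y v) =O[𝓝 0] id := by
  have hq : Continuous fun v : ℝ => 4 * s / 3 - (x - y) * v + (-2 * s ^ 3 - s * (x + y)) * v ^ 2
      + 5 / 2 * s ^ 2 * (x - y) * v ^ 3 := by
    fun_prop
  refine ((isBigO_refl (id : ℝ → ℝ) (𝓝 0)).mul ((hq.tendsto 0).isBigO_one ℝ)).congr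
    (fun v => ?_) fun v => mul_one v
  simp only [rescaledGapTaylor, id]
  ring

theorem rescaledGap_sq_sub_rescaledGapTaylor_sq_isBigO (s x y : ℝ) :
    (fun v => rescaledGap s x y v ^ 2 - rescaledGapTaylor s x y v ^ 2) =O[𝓝 0] (· ^ 6) := by
  have hdiff := rescaledGap_sub_rescaledGapTaylor_isBigO s x y
  have hv : (fun v : ℝ => v ^ 5) =O[𝓝 0] id :=
    ((isLittleO_pow_pow (by norm_num : 1 < 5)).isBigO).congr_right fun v => pow_one v
  have hsum : (fun v => rescaledGap s x y v + rescaledGapTaylor s x y v) =O[𝓝 0] id :=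
    ((hdiff.trans hv).add ((rescaledGapTaylor_isBigO s x y).const_mul_left 2)).congr_left
      fun v => by ring
  exact (hdiff.mul hsum).congr (fun v => by ring) fun v => by simp only [id]; ring

noncomputable def airyExponent (t x y : ℝ) : ℝ :=
  t ^ 3 / 12 - (x - y) ^ 2 / (4 * t) - t * (x + y) / 2

theorem pA_eq_exp_airyExponent_div (t x y : ℝ) :
    pA t x y = Real.exp (airyExponent t x y) / Real.sqrt (4 * Real.pi * t) :=
  one_div_mul_eq_div _ _

/-- The exponent of the conjugated Pearcey Gaussian at `v = z⁴`; its last term is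
`-(ξ - η)² / (2(τ₂ - τ₁))`. -/
noncomputable def conjugatedExponent (s x y v : ℝ) : ℝ :=
  (PhiFun x s v - hFun x s v) - (PhiFun y (-s) v - hFun y (-s) v)
    + rescaledGap s x y v ^ 2 / (8 * s * v ^ 4)

theorem conjugatedExponent_sub_airyExponent_isBigO {s : ℝ} (hs : s ≠ 0) (x y : ℝ) :
    (fun v => conjugatedExponent s x y v - airyExponent (-2 * s) x y) =O[𝓝[≠] 0] (· ^ 2) := by
  set Q : ℝ → ℝ := fun v =>
    ((-2 * s ^ 3 - s * (x + y)) ^ 2 - 5 * s ^ 2 * (x - y) ^ 2) / (8 * s)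
      + (-2 * s ^ 3 - s * (x + y)) * (5 / 2 * s ^ 2 * (x - y)) / (4 * s) * v
      + (5 / 2 * s ^ 2 * (x - y)) ^ 2 / (8 * s) * v ^ 2 with hQ
  -- the singular terms of the Pearcey phase cancel against those of `rescaledGapTaylor² / (8 s v⁴)`
  have hsplit : ∀ v ≠ 0, conjugatedExponent s x y v - airyExponent (-2 * s) x y
      = v ^ 2 * Q v + (8 * s)⁻¹
          * ((rescaledGap s x y v ^ 2 - rescaledGapTaylor s x y v ^ 2) * (v ^ 4)⁻¹) := by
    intro v hv
    simp only [conjugatedExponent, airyExponent, PhiFun, hFun, rescaledGapTaylor, hQ]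
    field_simp
    ring
  have hQv : (fun v => v ^ 2 * Q v) =O[𝓝[≠] 0] (· ^ 2) := by
    have hQc : Continuous Q := by simp only [hQ]; fun_prop
    exact ((isBigO_refl _ _).mul ((hQc.tendsto 0).mono_left nhdsWithin_le_nhds |>.isBigO_one ℝ))
      |>.congr_right fun v => mul_one _
  have hrest : (fun v => (8 * s)⁻¹
      * ((rescaledGap s x y v ^ 2 - rescaledGapTaylor s x y v ^ 2) * (v ^ 4)⁻¹))
      =O[𝓝[≠] 0] (· ^ 2) := by
    refine ((((rescaledGap_sq_sub_rescaledGapTaylor_sq_isBigO s x y).mono nhdsWithin_le_nhds).mul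
      (isBigO_refl _ _)).const_mul_left _).congr' .rfl ?_
    filter_upwards [self_mem_nhdsWithin] with v (hv : v ≠ 0)
    field_simp
  refine (hQv.add hrest).congr' ?_ .rfl
  filter_upwards [self_mem_nhdsWithin] with v hv using (hsplit v hv).symm

theorem rpow_mul_exp_conjugatedExponent_sub_isBigO {s : ℝ} (hs : s ≠ 0) (x y : ℝ) :
    (fun v => (1 - 36 * s ^ 2 * v ^ 2) ^ ((1 : ℝ) / 12) * Real.exp (conjugatedExponent s x y v)
      - Real.exp (airyExponent (-2 * s) x y)) =O[𝓝[≠] 0] (· ^ 2) := by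
  have hE := conjugatedExponent_sub_airyExponent_isBigO hs x y
  have hsq : Tendsto (fun v : ℝ => v ^ 2) (𝓝[≠] 0) (𝓝 0) := by
    simpa using ((continuous_pow 2).tendsto (0 : ℝ)).mono_left nhdsWithin_le_nhds
  have hEt : Tendsto (conjugatedExponent s x y) (𝓝[≠] 0) (𝓝 (airyExponent (-2 * s) x y)) :=
    tendsto_sub_nhds_zero_iff.mp (hE.trans_tendsto hsq)
  have hexp : (fun v => Real.exp (conjugatedExponent s x y v)
      - Real.exp (airyExponent (-2 * s) x y)) =O[𝓝[≠] 0] (· ^ 2) :=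
    ((Real.hasDerivAt_exp _).isBigO_sub.comp_tendsto hEt).trans hE
  have hroot : (fun v : ℝ => (1 - 36 * s ^ 2 * v ^ 2) ^ ((1 : ℝ) / 12) - 1) =O[𝓝[≠] 0] (· ^ 2) :=
    ((one_add_mul_rpow_sub_sum_isBigO (-(36 * s ^ 2)) ((1 : ℝ) / 12) 1).comp_tendsto hsq).congr
      (fun v => by simp [sub_eq_add_neg]) fun v => pow_one _
  have hprod := (hroot.mul (hEt.rexp.isBigO_one ℝ)).congr_right fun v => mul_one (v ^ 2)
  exact (hprod.add hexp).congr_left fun v => by ring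

theorem rpow_div_pow_eq {a z p : ℝ} {n m : ℕ} (ha : 0 ≤ a) (hz : 0 ≤ z) (h : n * p = m) :
    (a / z ^ n) ^ p = a ^ p / z ^ m := by
  rw [Real.div_rpow ha (by positivity), ← Real.rpow_natCast z n, ← Real.rpow_mul hz, h,
    Real.rpow_natCast]

theorem pP_neg_four_mul_div_sq {s z ξ η K : ℝ} (hz : 0 < z) (h : ξ - η = K / z ^ 9) :
    pP (-4 * s / z ^ 2) ξ η
      = z / Real.sqrt (4 * Real.pi * (-2 * s)) * Real.exp (K ^ 2 / (8 * s * (z ^ 4) ^ 4)) := by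
  have hsqrt : Real.sqrt (2 * Real.pi * (-4 * s / z ^ 2))
      = Real.sqrt (4 * Real.pi * (-2 * s)) / z := by
    rw [show 2 * Real.pi * (-4 * s / z ^ 2) = 4 * Real.pi * (-2 * s) / z ^ 2 by ring,
      Real.sqrt_div' _ (by positivity), Real.sqrt_sq hz.le]
  have hexponent : -(ξ - η) ^ 2 / (2 * (-4 * s / z ^ 2)) = K ^ 2 / (8 * s * (z ^ 4) ^ 4) := by
    rcases eq_or_ne s 0 with rfl | hs
    · simp
    · rw [h]
      field_simp
      ring
  rw [pP, hsqrt, hexponent, one_div_div]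

theorem conjugated_pearcey_gaussian_eq {s x y z τ₁ τ₂ ξ η : ℝ} (hz : 0 < z)
    (h₁ : 0 ≤ 1 + 6 * s * z ^ 4) (h₂ : 0 ≤ 1 - 6 * s * z ^ 4)
    (hτ₁ : τ₁ = (1 + 6 * s * z ^ 4) / (3 * z ^ 6)) (hτ₂ : τ₂ = (1 - 6 * s * z ^ 4) / (3 * z ^ 6))
    (hξ : ξ = (2 / 27) * (3 * τ₁) ^ ((3 : ℝ) / 2) - (3 * τ₁) ^ ((1 : ℝ) / 6) * x)
    (hη : η = (2 / 27) * (3 * τ₂) ^ ((3 : ℝ) / 2) - (3 * τ₂) ^ ((1 : ℝ) / 6) * y) :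
    (3 * τ₁) ^ ((1 : ℝ) / 12) * (3 * τ₂) ^ ((1 : ℝ) / 12)
        * Real.exp ((PhiFun x s (z ^ 4) - hFun x s (z ^ 4))
          - (PhiFun y (-s) (z ^ 4) - hFun y (-s) (z ^ 4)))
        * pP (τ₂ - τ₁) ξ η
      = (1 - 36 * s ^ 2 * (z ^ 4) ^ 2) ^ ((1 : ℝ) / 12)
          * Real.exp (conjugatedExponent s x y (z ^ 4)) / Real.sqrt (4 * Real.pi * (-2 * s)) := by
  have h3τ₁ : 3 * τ₁ = (1 + 6 * s * z ^ 4) / z ^ 6 := by rw [hτ₁]; field_simp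
  have h3τ₂ : 3 * τ₂ = (1 - 6 * s * z ^ 4) / z ^ 6 := by rw [hτ₂]; field_simp
  have hτ : τ₂ - τ₁ = -4 * s / z ^ 2 := by rw [hτ₁, hτ₂]; field_simp; ring
  have hgap : ξ - η = rescaledGap s x y (z ^ 4) / z ^ 9 := by
    rw [hξ, hη, h3τ₁, h3τ₂, rpow_div_pow_eq h₁ hz.le (m := 9) (by norm_num),
      rpow_div_pow_eq h₂ hz.le (m := 9) (by norm_num),
      rpow_div_pow_eq h₁ hz.le (m := 1) (by norm_num),
      rpow_div_pow_eq h₂ hz.le (m := 1) (by norm_num), rescaledGap]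
    field_simp
    ring
  have hroot : (3 * τ₁) ^ ((1 : ℝ) / 12) * (3 * τ₂) ^ ((1 : ℝ) / 12)
      = (1 - 36 * s ^ 2 * (z ^ 4) ^ 2) ^ ((1 : ℝ) / 12) / z := by
    rw [h3τ₁, h3τ₂, ← Real.mul_rpow (div_nonneg h₁ (by positivity)) (div_nonneg h₂ (by positivity)),
      div_mul_div_comm, ← pow_add, show (1 + 6 * s * z ^ 4) * (1 - 6 * s * z ^ 4)
        = 1 - 36 * s ^ 2 * (z ^ 4) ^ 2 by ring,
      rpow_div_pow_eq (by nlinarith [mul_nonneg h₁ h₂]) hz.le (m := 1) (by norm_num), pow_one]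
  rw [hroot, hτ, pP_neg_four_mul_div_sq hz hgap, conjugatedExponent, Real.exp_add]
  field_simp

/-- under the Pearcey-to-Airy space-time rescaling, the conjugated
Pearcey Gaussian part approximates the Airy Gaussian factor up to `O(z⁸)` as `z → 0⁺`. -/
theorem pearcey_gaussian_to_airy_gaussian
    (s : ℝ) (hs : s < 0) (x y : ℝ)
    (τ₁ τ₂ ξ η : ℝ → ℝ)
    (hτ₁ : ∀ z : ℝ, τ₁ z = (1 + 6 * s * z ^ 4) / (3 * z ^ 6))
    (hτ₂ : ∀ z : ℝ, τ₂ z = (1 - 6 * s * z ^ 4) / (3 * z ^ 6))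
    (hξ : ∀ z : ℝ,
      ξ z = (2 / 27) * (3 * τ₁ z) ^ ((3 : ℝ) / 2) - (3 * τ₁ z) ^ ((1 : ℝ) / 6) * x)
    (hη : ∀ z : ℝ,
      η z = (2 / 27) * (3 * τ₂ z) ^ ((3 : ℝ) / 2) - (3 * τ₂ z) ^ ((1 : ℝ) / 6) * y) :
    (fun z : ℝ =>
        (3 * τ₁ z) ^ ((1 : ℝ) / 12) * (3 * τ₂ z) ^ ((1 : ℝ) / 12)
          * Real.exp ((PhiFun x s (z ^ 4) - hFun x s (z ^ 4))
              - (PhiFun y (-s) (z ^ 4) - hFun y (-s) (z ^ 4)))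
          * pP (τ₂ z - τ₁ z) (ξ z) (η z)
        - pA (-2 * s) x y)
      =O[nhdsWithin (0 : ℝ) (Ioi 0)] (fun z : ℝ => z ^ 8) := by
  have hz4 : Tendsto (fun z : ℝ => z ^ 4) (𝓝[>] 0) (𝓝 0) := by
    simpa using ((continuous_pow 4).tendsto (0 : ℝ)).mono_left nhdsWithin_le_nhds
  have hz4ne : Tendsto (fun z : ℝ => z ^ 4) (𝓝[>] 0) (𝓝[≠] 0) :=
    tendsto_nhdsWithin_of_tendsto_nhds_of_eventually_within _ hz4 <| by
      filter_upwards [self_mem_nhdsWithin] with z (hz : 0 < z) using pow_ne_zero 4 hz.ne'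
  have hnonneg (c : ℝ) : ∀ᶠ z in 𝓝[>] 0, 0 ≤ 1 + c * z ^ 4 := by
    have h : Tendsto (fun z : ℝ => 1 + c * z ^ 4) (𝓝[>] 0) (𝓝 1) := by
      simpa using (hz4.const_mul c).const_add 1
    exact h.eventually (eventually_ge_nhds one_pos)
  have hO := ((rpow_mul_exp_conjugatedExponent_sub_isBigO hs.ne x y).comp_tendsto
    hz4ne).const_mul_left (Real.sqrt (4 * Real.pi * (-2 * s)))⁻¹
  refine hO.congr' ?_ (.of_forall fun z => by simp [← pow_mul])
  filter_upwards [self_mem_nhdsWithin, hnonneg (6 * s), hnonneg (-(6 * s))] with z hz h₁ h₂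
  rw [conjugated_pearcey_gaussian_eq hz h₁ (by linarith) (hτ₁ z) (hτ₂ z) (hξ z) (hη z),
    pA_eq_exp_airyExponent_div]
  simp only [Function.comp_apply]
  ring
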